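/- arXiv:0806.0073 — 5 statements merged into one kernel-verified Lean document; each statement's English description precedes it below -/
import Mathlib

section
/- Let w : (0,∞) → ℝ be integrable on (0,t) for every t > 0 and suppose that |Pw(t) − w(t)| ≤ C for all t > 0. Then Pw is itself integrable on (0,t) for every t > 0 and |P(Pw)(t) − Pw(t)| ≤ C for all t > 0. (In the notation of the paper: the averaging operator P is bounded on the space W, with ‖Pw‖_W ≤ ‖w‖_W.) -/
/-! Since `Pw(t)` is itself the average of `w` over `(0,t)`, linearity gives
`P(Pw) - Pw = P(Pw - w)`, and an average of a function bounded by `C` is bounded by `C`.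
Integrability of `Pw` near `0` comes from `|Pw| ≤ C + |w|`, and `Pw` is continuous (hence
measurable) away from `0` as a primitive divided by `t`. -/

open MeasureTheory Set Real Filter

/-- The averaging operator `Pw(t) = (1/t) ∫₀ᵗ w(s) ds`. -/
noncomputable def Pav (w : ℝ → ℝ) (t : ℝ) : ℝ := (1 / t) * ∫ s in Ioo (0 : ℝ) t, w s

section Pav

variable {f g w : ℝ → ℝ} {t C : ℝ}

theorem continuousOn_Pav (hw : IntegrableOn w (Ioo 0 t)) : ContinuousOn (Pav w) (Ioo 0 t) := by
  have hprim : ContinuousOn (fun x => ∫ s in Ioc (0 : ℝ) x, w s) (Icc 0 t) :=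
    intervalIntegral.continuousOn_primitive ((integrableOn_Icc_iff_integrableOn_Ioo).mpr hw)
  have hquot : ContinuousOn (fun x => (1 / x) * ∫ s in Ioc (0 : ℝ) x, w s) (Ioo 0 t) :=
    (continuousOn_const.div continuousOn_id fun x hx => hx.1.ne').mul
      (hprim.mono Ioo_subset_Icc_self)
  refine hquot.congr fun x _ => ?_
  simp only [Pav, integral_Ioc_eq_integral_Ioo]

theorem integrableOn_Pav_of_abs_sub_le (hw : IntegrableOn w (Ioo 0 t))
    (hC : ∀ s ∈ Ioo 0 t, |Pav w s - w s| ≤ C) : IntegrableOn (Pav w) (Ioo 0 t) := by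
  have hdom : IntegrableOn (fun s => C + |w s|) (Ioo 0 t) :=
    (integrableOn_const (by simp [Real.volume_Ioo])).add hw.abs
  refine hdom.mono' ((continuousOn_Pav hw).aestronglyMeasurable measurableSet_Ioo) ?_
  filter_upwards [ae_restrict_mem measurableSet_Ioo] with s hs
  calc ‖Pav w s‖ = |(Pav w s - w s) + w s| := by rw [sub_add_cancel, Real.norm_eq_abs]
    _ ≤ |Pav w s - w s| + |w s| := abs_add_le _ _
    _ ≤ C + |w s| := by gcongr; exact hC s hs

theorem Pav_sub (hf : IntegrableOn f (Ioo 0 t)) (hg : IntegrableOn g (Ioo 0 t)) :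
    Pav (fun s => f s - g s) t = Pav f t - Pav g t := by
  rw [Pav, Pav, Pav, integral_sub hf hg, mul_sub]

theorem abs_Pav_le (ht : 0 < t) (hC : ∀ s ∈ Ioo 0 t, |f s| ≤ C) : |Pav f t| ≤ C := by
  have hint : ‖∫ s in Ioo (0 : ℝ) t, f s‖ ≤ C * t := by
    simpa [Real.volume_real_Ioo, ht.le] using
      norm_setIntegral_le_of_norm_le_const (measure_Ioo_lt_top (μ := volume)) fun s hs =>
        (Real.norm_eq_abs (f s)).trans_le (hC s hs)
  calc |Pav f t| = (1 / t) * ‖∫ s in Ioo (0 : ℝ) t, f s‖ := by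
        rw [Pav, abs_mul, abs_of_pos (one_div_pos.2 ht), Real.norm_eq_abs]
    _ ≤ (1 / t) * (C * t) := by gcongr
    _ = C := by field_simp

end Pav

/-- The averaging operator `P` is bounded on the space `W`: if `w` is locally integrable
near `0` and `|Pw - w| ≤ C` on `(0,∞)`, then so is `Pw`, with the same bound. -/
theorem P_bounded_on_W (w : ℝ → ℝ) (C : ℝ)
    (hInt : ∀ t > (0 : ℝ), IntegrableOn w (Ioo 0 t))
    (hW : ∀ t > (0 : ℝ), |Pav w t - w t| ≤ C) :
    (∀ t > (0 : ℝ), IntegrableOn (Pav w) (Ioo 0 t)) ∧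
      ∀ t > (0 : ℝ), |Pav (Pav w) t - Pav w t| ≤ C := by
  have hPint : ∀ t > (0 : ℝ), IntegrableOn (Pav w) (Ioo 0 t) := fun t ht =>
    integrableOn_Pav_of_abs_sub_le (hInt t ht) fun s hs => hW s hs.1
  refine ⟨hPint, fun t ht => ?_⟩
  rw [← Pav_sub (hPint t ht) (hInt t ht)]
  exact abs_Pav_le ht fun s hs => hW s hs.1
end

section
/- Let w : (0,∞) → ℝ be integrable on (0,t) for every t > 0 and suppose that ‖w‖_W := sup_{t>0} |Pw(t) − w(t)| ≤ C. Then |Pw(t) − Pw(1)| ≤ C·|log t| for all t > 0; in particular |Pw(t)| ≤ |Pw(1)| + C·(1 + |log t|) for all t > 0. -/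
open MeasureTheory Set Real Filter

/-!
The primitive `F x = ∫₀ˣ w` is absolutely continuous, so on `[a, b] ⊂ (0, ∞)` the fundamental
theorem of calculus applies to `Pw = F / x`, whose derivative is `(w − Pw) / x` almost everywhere.
Hence `Pw(b) − Pw(a) = ∫ₐᵇ (w − Pw)(x) dx / x`, and `|w − Pw| ≤ C` bounds this by
`C (log b − log a)`.
-/

theorem Pav_eq_inv_mul_intervalIntegral (w : ℝ → ℝ) {t : ℝ} (ht : 0 < t) :
    Pav w t = t⁻¹ * ∫ s in 0..t, w s := by
  rw [Pav, one_div, intervalIntegral.integral_of_le ht.le, integral_Ioc_eq_integral_Ioo]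

theorem inv_mul_integral_sub_eq_integral {w : ℝ → ℝ} {a b : ℝ}
    (hw : IntervalIntegrable w volume 0 b) (ha : 0 < a) (hab : a ≤ b) :
    b⁻¹ * (∫ s in 0..b, w s) - a⁻¹ * (∫ s in 0..a, w s) =
      ∫ x in a..b, (w x - x⁻¹ * ∫ s in 0..x, w s) / x := by
  have hsub : uIcc a b ⊆ uIcc 0 b := by
    rw [uIcc_of_le hab, uIcc_of_le (ha.le.trans hab)]
    exact Icc_subset_Icc_left ha.le
  have hF : AbsolutelyContinuousOnInterval (fun x => ∫ s in 0..x, w s) a b :=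
    (hw.absolutelyContinuousOnInterval_intervalIntegral left_mem_uIcc).mono hsub
  have hinv : AbsolutelyContinuousOnInterval (fun x : ℝ => x⁻¹) a b := by
    refine ContDiffOn.absolutelyContinuousOnInterval (contDiffOn_inv ℝ |>.mono ?_)
    intro x hx
    rw [uIcc_of_le hab] at hx
    exact (ha.trans_le hx.1).ne'
  rw [← (hinv.fun_mul hF).integral_deriv_eq_sub]
  refine intervalIntegral.integral_congr_ae ?_
  filter_upwards [hw.ae_hasDerivAt_integral] with x hF' hx
  have hx0 : x ≠ 0 := by
    rw [uIoc_of_le hab] at hx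
    exact (ha.trans hx.1).ne'
  have hderiv : HasDerivAt (fun y => y⁻¹ * ∫ s in 0..y, w s)
      (-(x ^ 2)⁻¹ * (∫ s in 0..x, w s) + x⁻¹ * w x) x :=
    (hasDerivAt_inv hx0).mul (hF' (hsub (uIoc_subset_uIcc hx)) 0 left_mem_uIcc)
  rw [hderiv.deriv]
  field_simp
  ring

theorem abs_Pav_sub_Pav_le {w : ℝ → ℝ} {C a b : ℝ}
    (hInt : ∀ t > (0 : ℝ), IntegrableOn w (Ioo 0 t))
    (hW : ∀ t > (0 : ℝ), |Pav w t - w t| ≤ C) (ha : 0 < a) (hb : 0 < b) :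
    |Pav w b - Pav w a| ≤ C * |log b - log a| := by
  wlog hab : a ≤ b generalizing a b
  · rw [abs_sub_comm, abs_sub_comm (log b)]
    exact this hb ha (le_of_not_ge hab)
  have hw : IntervalIntegrable w volume 0 b :=
    (intervalIntegrable_iff_integrableOn_Ioo_of_le hb.le).2 (hInt b hb)
  rw [abs_of_nonneg (sub_nonneg.2 (log_le_log ha hab)), ← log_div hb.ne' ha.ne',
    ← integral_inv_of_pos ha hb, ← intervalIntegral.integral_const_mul C,
    Pav_eq_inv_mul_intervalIntegral w ha, Pav_eq_inv_mul_intervalIntegral w hb,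
    inv_mul_integral_sub_eq_integral hw ha hab, ← Real.norm_eq_abs]
  refine intervalIntegral.norm_integral_le_of_norm_le hab ?_ ?_
  · filter_upwards with x hx
    have hx0 : 0 < x := ha.trans hx.1
    rw [← Pav_eq_inv_mul_intervalIntegral w hx0, norm_div, Real.norm_of_nonneg hx0.le,
      Real.norm_eq_abs, abs_sub_comm, ← div_eq_mul_inv]
    exact div_le_div_of_nonneg_right (hW x hx0) hx0.le
  · refine ContinuousOn.intervalIntegrable (continuousOn_const.mul (continuousOn_inv₀.mono ?_))
    intro x hx
    rw [uIcc_of_le hab] at hx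
    exact (ha.trans_le hx.1).ne'

/-- If `‖w‖_W ≤ C` then `Pw` has at most logarithmic growth:
`|Pw(t) − Pw(1)| ≤ C|log t|`, hence `|Pw(t)| ≤ |Pw(1)| + C(1 + |log t|)`. -/
theorem Pw_log_growth (w : ℝ → ℝ) (C : ℝ)
    (hInt : ∀ t > (0 : ℝ), IntegrableOn w (Ioo 0 t))
    (hW : ∀ t > (0 : ℝ), |Pav w t - w t| ≤ C) :
    ∀ t > (0 : ℝ),
      |Pav w t - Pav w 1| ≤ C * |Real.log t| ∧
      |Pav w t| ≤ |Pav w 1| + C * (1 + |Real.log t|) := by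
  intro t ht
  have hlog : |Pav w t - Pav w 1| ≤ C * |log t| := by
    simpa using abs_Pav_sub_Pav_le hInt hW one_pos ht
  have hC : 0 ≤ C := (abs_nonneg _).trans (hW 1 one_pos)
  refine ⟨hlog, ?_⟩
  linarith [abs_sub_abs_le_abs_sub (Pav w t) (Pav w 1)]
end

section
/- Let w : (0,∞) → ℝ be differentiable on (0,∞) with |s·w′(s)| ≤ C for all s > 0. Then w is integrable on (0,t) for every t > 0 and |Pw(t) − w(t)| ≤ C for all t > 0; that is, w ∈ W with ‖w‖_W ≤ C. (In the notation of the paper: W₁ ⊂ W, where W₁ = {w : sup_s |s·w′(s)| < ∞}.) -/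
/-!
The bound `|s w'(s)| ≤ C` says that `w ∘ exp` is `C`-Lipschitz, i.e.
`|w s - w t| ≤ C log (t / s)` for `0 < s ≤ t`. This majorant is integrable on `(0, t)` with
`∫₀ᵗ log (t / s) ds = t`, so `w` is integrable there and
`|Pw(t) - w(t)| ≤ (1/t) ∫₀ᵗ |w s - w t| ds ≤ C`.
-/

open MeasureTheory Set Real Filter

theorem abs_sub_le_mul_abs_log_sub_log {w w' : ℝ → ℝ} {C : ℝ}
    (hderiv : ∀ s > 0, HasDerivAt w (w' s) s) (hbound : ∀ s > 0, |s * w' s| ≤ C)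
    {a b : ℝ} (ha : 0 < a) (hb : 0 < b) : |w b - w a| ≤ C * |log b - log a| := by
  have hcomp : ∀ u ∈ univ, HasDerivWithinAt (w ∘ exp) (w' (exp u) * exp u) univ u :=
    fun u _ => ((hderiv _ (exp_pos u)).comp u (hasDerivAt_exp u)).hasDerivWithinAt
  have hlip := convex_univ.norm_image_sub_le_of_norm_hasDerivWithin_le hcomp
    (fun u _ => by rw [mul_comm]; exact hbound _ (exp_pos u)) (mem_univ (log a))
    (mem_univ (log b))
  simpa [exp_log ha, exp_log hb] using hlip

theorem integrableOn_log_sub_log {t : ℝ} (ht : 0 ≤ t) :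
    IntegrableOn (fun s => log t - log s) (Ioo 0 t) :=
  (integrableOn_const measure_Ioo_lt_top.ne).sub <|
    (intervalIntegrable_iff_integrableOn_Ioo_of_le ht).1 intervalIntegral.intervalIntegrable_log'

theorem integral_log_sub_log {t : ℝ} (ht : 0 ≤ t) :
    ∫ s in Ioo 0 t, (log t - log s) = t := by
  rw [← integral_Ioc_eq_integral_Ioo, ← intervalIntegral.integral_of_le ht,
    intervalIntegral.integral_sub intervalIntegrable_const intervalIntegral.intervalIntegrable_log',
    intervalIntegral.integral_const, integral_log]
  simp

section LogMajorant

variable {w : ℝ → ℝ} {C t : ℝ}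

theorem integrableOn_Ioo_of_abs_sub_le_log (ht : 0 ≤ t)
    (hw : AEStronglyMeasurable w (volume.restrict (Ioo 0 t)))
    (hlog : ∀ s ∈ Ioo 0 t, |w s - w t| ≤ C * (log t - log s)) :
    IntegrableOn w (Ioo 0 t) := by
  have hdev : IntegrableOn (fun s => w s - w t) (Ioo 0 t) :=
    ((integrableOn_log_sub_log ht).const_mul C).mono' (hw.sub aestronglyMeasurable_const)
      ((ae_restrict_iff' measurableSet_Ioo).2 (ae_of_all _ hlog))
  simpa only [Pi.add_def, sub_add_cancel] using
    hdev.add (integrableOn_const (C := w t) measure_Ioo_lt_top.ne)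

theorem abs_Pav_sub_le_of_abs_sub_le_log (ht : 0 < t) (hw : IntegrableOn w (Ioo 0 t))
    (hlog : ∀ s ∈ Ioo 0 t, |w s - w t| ≤ C * (log t - log s)) :
    |Pav w t - w t| ≤ C := by
  have hmean : Pav w t - w t = t⁻¹ * ∫ s in Ioo 0 t, (w s - w t) := by
    rw [integral_sub hw (integrableOn_const measure_Ioo_lt_top.ne), setIntegral_const,
      measureReal_def, Real.volume_Ioo, ENNReal.toReal_ofReal (by linarith), Pav]
    field_simp
    simp
  have hdev : ‖∫ s in Ioo 0 t, (w s - w t)‖ ≤ C * t := calc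
    _ ≤ ∫ s in Ioo 0 t, C * (log t - log s) :=
      norm_integral_le_of_norm_le ((integrableOn_log_sub_log ht.le).const_mul C)
        ((ae_restrict_iff' measurableSet_Ioo).2 (ae_of_all _ hlog))
    _ = C * t := by rw [integral_const_mul, integral_log_sub_log ht.le]
  rw [hmean, abs_mul, abs_inv, abs_of_pos ht]
  calc t⁻¹ * |∫ s in Ioo 0 t, (w s - w t)| ≤ t⁻¹ * (C * t) := by gcongr; exact hdev
    _ = C := by field_simp

end LogMajorant

/-- `W₁ ⊂ W`: if `w` is differentiable on `(0,∞)` with `|s w'(s)| ≤ C`, then `w` is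
integrable near the origin and `‖w‖_W ≤ C`. -/
theorem W1_subset_W (w w' : ℝ → ℝ) (C : ℝ)
    (hderiv : ∀ s ∈ Ioi (0 : ℝ), HasDerivWithinAt w (w' s) (Ioi 0) s)
    (hbound : ∀ s > (0 : ℝ), |s * w' s| ≤ C) :
    (∀ t > (0 : ℝ), IntegrableOn w (Ioo 0 t)) ∧
      ∀ t > (0 : ℝ), |Pav w t - w t| ≤ C := by
  have hD : ∀ s > 0, HasDerivAt w (w' s) s :=
    fun s hs => (hderiv s hs).hasDerivAt (Ioi_mem_nhds hs)
  have hlog : ∀ t > 0, ∀ s ∈ Ioo 0 t, |w s - w t| ≤ C * (log t - log s) := by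
    intro t ht s hs
    have h := abs_sub_le_mul_abs_log_sub_log hD hbound hs.1 ht
    rwa [abs_sub_comm, abs_of_nonneg (sub_nonneg.2 (log_le_log hs.1 hs.2.le))] at h
  have hint : ∀ t > 0, IntegrableOn w (Ioo 0 t) := fun t ht =>
    integrableOn_Ioo_of_abs_sub_le_log ht.le
      (ContinuousOn.aestronglyMeasurable
        (fun s hs => (hD s hs.1).continuousAt.continuousWithinAt) measurableSet_Ioo) (hlog t ht)
  exact ⟨hint, fun t ht => abs_Pav_sub_le_of_abs_sub_le_log ht (hint t ht) (hlog t ht)⟩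
end

section
/- Let v : (0,∞) → ℝ be measurable with |v(s)| ≤ M for all s > 0, and define Q̄v(t) = ∫_t^1 v(s) ds/s for t > 0 (so Q̄v(t) = −∫_1^t v(s) ds/s for t > 1). Then Q̄v is integrable on (0,t) for every t > 0 and |P(Q̄v)(t) − Q̄v(t)| ≤ M for all t > 0; that is, Q̄v ∈ W with ‖Q̄v‖_W ≤ M. (This is the inclusion L^∞ + Q̄(L^∞) ⊆ W.) -/
/-!
For `0 < r < t` we have `Q̄v(r) = Q̄v(t) + ∫ᵣᵗ v(s) ds/s`; exchanging the order of integration over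
the triangle `0 < r < s < t` gives `∫₀ᵗ Q̄v = t Q̄v(t) + ∫₀ᵗ v`, i.e. `P(Q̄v) − Q̄v = Pv`, which is
bounded by `M`. Integrability of `Q̄v` near `0` follows from `|Q̄v(r)| ≤ M |log r|`.
-/

open MeasureTheory Set Real Filter

open scoped Interval

noncomputable def Qbar (v : ℝ → ℝ) (t : ℝ) : ℝ := ∫ s in t..1, v s / s

theorem integrableOn_of_abs_le {v : ℝ → ℝ} {M : ℝ} (hmeas : Measurable v)
    (hv : ∀ s > (0 : ℝ), |v s| ≤ M) {S : Set ℝ} (hS : MeasurableSet S) (hS_pos : S ⊆ Ioi 0)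
    (hS_fin : volume S ≠ ⊤) : IntegrableOn v S :=
  Measure.integrableOn_of_bounded hS_fin hmeas.aestronglyMeasurable <|
    (ae_restrict_iff' hS).2 <| .of_forall fun s hs => hv s (hS_pos hs)

theorem IntervalIntegrable.div_id {v : ℝ → ℝ} {a b : ℝ} (hv : IntervalIntegrable v volume a b)
    (h0 : (0 : ℝ) ∉ [[a, b]]) : IntervalIntegrable (fun s => v s / s) volume a b := by
  simpa only [div_eq_mul_inv] using
    hv.mul_continuousOn (continuousOn_inv₀.mono fun s hs (hs0 : s = 0) => h0 (hs0 ▸ hs))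

theorem intervalIntegrable_div_id_of_abs_le {v : ℝ → ℝ} {M : ℝ} (hmeas : Measurable v)
    (hv : ∀ s > (0 : ℝ), |v s| ≤ M) {a b : ℝ} (ha : 0 < a) (hb : 0 < b) :
    IntervalIntegrable (fun s => v s / s) volume a b := by
  refine IntervalIntegrable.div_id ?_ (notMem_uIcc_of_lt ha hb)
  exact (intervalIntegrable_iff.2 <| integrableOn_of_abs_le hmeas hv measurableSet_uIoc
    (fun s hs => (lt_min ha hb).trans hs.1) measure_Ioc_lt_top.ne)

theorem continuousOn_intervalIntegral_left_Ioi {g : ℝ → ℝ} {c : ℝ} (hc : 0 < c)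
    (hg : ∀ a b, 0 < a → 0 < b → IntervalIntegrable g volume a b) :
    ContinuousOn (fun r => ∫ s in r..c, g s) (Ioi 0) := by
  rintro r (hr : 0 < r)
  have hmin : 0 < min c (r / 2) := lt_min hc (half_pos hr)
  have hle : min c (r / 2) ≤ max c (r + 1) := (min_le_left _ _).trans (le_max_left _ _)
  have hcont := intervalIntegral.continuousOn_primitive_interval'
    (hg _ _ hmin (lt_max_of_lt_left hc)) (a := c)
    (by rw [uIcc_of_le hle]; exact ⟨min_le_left _ _, le_max_left _ _⟩)
  have hnhds : [[min c (r / 2), max c (r + 1)]] ∈ nhds r := by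
    rw [uIcc_of_le hle]
    exact Icc_mem_nhds ((min_le_right _ _).trans_lt (half_lt_self hr))
      ((lt_add_one r).trans_le (le_max_right _ _))
  simp_rw [intervalIntegral.integral_symm c]
  exact (hcont.continuousAt hnhds).neg.continuousWithinAt

theorem abs_Qbar_le {v : ℝ → ℝ} {M : ℝ}
    (hv : ∀ s > (0 : ℝ), |v s| ≤ M) {r : ℝ} (hr : 0 < r) : |Qbar v r| ≤ M * |log r| := by
  have h0 : (0 : ℝ) ∉ [[r, 1]] := notMem_uIcc_of_lt hr one_pos
  have hM : 0 ≤ M := (abs_nonneg _).trans (hv 1 one_pos)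
  have hle : ∀ᵐ s ∂volume.restrict (Ι r 1), ‖v s / s‖ ≤ M * s⁻¹ := by
    refine (ae_restrict_iff' measurableSet_uIoc).2 (.of_forall fun s hs => ?_)
    have hs : 0 < s := (lt_min hr one_pos).trans hs.1
    rw [norm_div, norm_of_nonneg hs.le, div_eq_mul_inv]
    exact mul_le_mul_of_nonneg_right (hv s hs) (inv_nonneg.2 hs.le)
  have hint : IntervalIntegrable (fun s => M * s⁻¹) volume r 1 :=
    (intervalIntegral.intervalIntegrable_inv (fun s hs hs0 => h0 (hs0 ▸ hs))
      continuousOn_id).const_mul M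
  calc |Qbar v r| ≤ |∫ s in r..1, M * s⁻¹| :=
        intervalIntegral.norm_integral_le_abs_of_norm_le hle hint
    _ = M * |log r| := by
        rw [intervalIntegral.integral_const_mul, integral_inv h0, abs_mul, abs_of_nonneg hM,
          one_div, log_inv, abs_neg]

theorem integrableOn_Qbar {v : ℝ → ℝ} {M : ℝ} (hmeas : Measurable v)
    (hv : ∀ s > (0 : ℝ), |v s| ≤ M) (t : ℝ) : IntegrableOn (Qbar v) (Ioo 0 t) := by
  have hcont : ContinuousOn (Qbar v) (Ioo 0 t) :=
    (continuousOn_intervalIntegral_left_Ioi one_pos fun a b ha hb =>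
      intervalIntegrable_div_id_of_abs_le hmeas hv ha hb).mono fun r hr => hr.1
  have hlog : IntegrableOn (fun r => M * |log r|) (Ioo 0 t) :=
    (((intervalIntegral.intervalIntegrable_log' (a := 0) (b := t)).1.mono_set
      Ioo_subset_Ioc_self).norm).const_mul M
  refine hlog.mono' (hcont.aestronglyMeasurable measurableSet_Ioo) ?_
  exact (ae_restrict_iff' measurableSet_Ioo).2 (.of_forall fun r hr => abs_Qbar_le hv hr.1)

theorem setIntegral_Ioo_indicator_Iio_const {a t s : ℝ} (hs : s ∈ Ioo a t) (c : ℝ) :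
    ∫ r in Ioo a t, (Iio s).indicator (fun _ => c) r = (s - a) * c := by
  rw [setIntegral_indicator measurableSet_Iio, setIntegral_const, smul_eq_mul,
    show Ioo a t ∩ Iio s = Ioo a s by ext; simp; grind, Real.volume_real_Ioo_of_le hs.1.le]

theorem setIntegral_Ioo_intervalIntegral {g : ℝ → ℝ} {a t : ℝ} (hg : Measurable g)
    (hint : IntegrableOn (fun s => (s - a) * g s) (Ioo a t)) :
    ∫ r in Ioo a t, ∫ s in r..t, g s = ∫ s in Ioo a t, (s - a) * g s := by
  set μ := volume.restrict (Ioo a t)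
  set f : ℝ → ℝ → ℝ := fun r s => (Iio s).indicator (fun _ => g s) r
  have hf : Integrable (Function.uncurry f) (μ.prod μ) := by
    have hmeas : Measurable (Function.uncurry f) :=
      Measurable.ite (measurableSet_lt measurable_fst measurable_snd)
        (hg.comp measurable_snd) measurable_const
    refine (integrable_prod_iff' hmeas.aestronglyMeasurable).2
      ⟨.of_forall fun s => show Integrable (fun r => f r s) μ from
        (integrable_const (g s)).indicator measurableSet_Iio, ?_⟩
    refine hint.norm.congr ((ae_restrict_iff' measurableSet_Ioo).2 (.of_forall fun s hs => ?_))
    simp only [Function.uncurry_apply_pair, f, norm_indicator_eq_indicator_norm]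
    rw [setIntegral_Ioo_indicator_Iio_const hs, norm_mul, norm_of_nonneg (sub_pos.2 hs.1).le]
  calc ∫ r in Ioo a t, ∫ s in r..t, g s = ∫ r, ∫ s, f r s ∂μ ∂μ := by
        refine setIntegral_congr_fun measurableSet_Ioo fun r hr => ?_
        have hslice : (fun s => f r s) = (Ioi r).indicator g := by
          ext s; simp [f, indicator]
        simp only [hslice]
        rw [setIntegral_indicator measurableSet_Ioi, intervalIntegral.integral_of_le hr.2.le,
          integral_Ioc_eq_integral_Ioo, show Ioo a t ∩ Ioi r = Ioo r t by ext; simp; grind]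
    _ = ∫ s, ∫ r, f r s ∂μ ∂μ := integral_integral_swap hf
    _ = ∫ s in Ioo a t, (s - a) * g s :=
        setIntegral_congr_fun measurableSet_Ioo fun s hs =>
          setIntegral_Ioo_indicator_Iio_const hs (g s)

theorem setIntegral_Qbar {v : ℝ → ℝ} {M : ℝ} (hmeas : Measurable v)
    (hv : ∀ s > (0 : ℝ), |v s| ≤ M) {t : ℝ} (ht : 0 < t) :
    ∫ r in Ioo 0 t, Qbar v r = t * Qbar v t + ∫ s in Ioo 0 t, v s := by
  have hsplit : ∀ r ∈ Ioo 0 t, Qbar v r - Qbar v t = ∫ s in r..t, v s / s := fun r hr =>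
    sub_eq_of_eq_add (intervalIntegral.integral_add_adjacent_intervals
      (intervalIntegrable_div_id_of_abs_le hmeas hv hr.1 ht)
      (intervalIntegrable_div_id_of_abs_le hmeas hv ht one_pos)).symm
  have hv_eq : ∀ s ∈ Ioo 0 t, (s - 0) * (v s / s) = v s := fun s hs => by
    rw [sub_zero, mul_div_cancel₀ _ hs.1.ne']
  have hvint : IntegrableOn v (Ioo 0 t) := integrableOn_of_abs_le hmeas hv measurableSet_Ioo
    (fun s hs => hs.1) measure_Ioo_lt_top.ne
  have hfubini := setIntegral_Ioo_intervalIntegral (g := fun s => v s / s)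
    (hmeas.div measurable_id) (hvint.congr_fun (fun s hs => (hv_eq s hs).symm) measurableSet_Ioo)
  rw [setIntegral_congr_fun measurableSet_Ioo hv_eq,
    ← setIntegral_congr_fun measurableSet_Ioo hsplit,
    integral_sub (integrableOn_Qbar hmeas hv t) (integrable_const _), setIntegral_const,
    Real.volume_real_Ioo_of_le ht.le] at hfubini
  rw [← hfubini, smul_eq_mul, sub_zero]
  ring

theorem abs_Pav_Qbar_sub_le {v : ℝ → ℝ} {M : ℝ} (hmeas : Measurable v)
    (hv : ∀ s > (0 : ℝ), |v s| ≤ M) {t : ℝ} (ht : 0 < t) : |Pav (Qbar v) t - Qbar v t| ≤ M := by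
  have hv_int_le : ‖∫ s in Ioo 0 t, v s‖ ≤ M * volume.real (Ioo 0 t) :=
    norm_setIntegral_le_of_norm_le_const measure_Ioo_lt_top fun s hs => hv s hs.1
  rw [Real.volume_real_Ioo_of_le ht.le, sub_zero] at hv_int_le
  have hPav : Pav (Qbar v) t - Qbar v t = (∫ s in Ioo 0 t, v s) / t := by
    rw [Pav, setIntegral_Qbar hmeas hv ht]
    field_simp
    ring
  rw [hPav, abs_div, abs_of_pos ht, div_le_iff₀ ht]
  exact hv_int_le

/-- The inclusion `Q̄(L^∞) ⊆ W`: if `|v| ≤ M` on `(0,∞)`, then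
`Q̄v(t) = ∫ₜ¹ v(s) ds/s` belongs to `W` with `‖Q̄v‖_W ≤ M`. -/
theorem Qbar_Linfty_subset_W (v : ℝ → ℝ) (M : ℝ)
    (hmeas : Measurable v) (hbound : ∀ s > (0 : ℝ), |v s| ≤ M) :
    (∀ t > (0 : ℝ),
      IntegrableOn (fun r => ∫ s in r..(1 : ℝ), v s / s) (Ioo 0 t)) ∧
    ∀ t > (0 : ℝ),
      |Pav (fun r => ∫ s in r..(1 : ℝ), v s / s) t - ∫ s in t..(1 : ℝ), v s / s| ≤ M :=
  ⟨fun t _ => integrableOn_Qbar hmeas hbound t, fun _ ht => abs_Pav_Qbar_sub_le hmeas hbound ht⟩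
end

section
/- Let 0 < θ < 1 and 1 ≤ q ≤ ∞. Then for every measurable g : (0,∞) → [0,∞]: (i) Φ_{θ,q}(t ↦ ∫₀ᵗ g(r)·log(t/r) dr/r) ≤ θ^{−2}·Φ_{θ,q}(g), and (ii) Φ_{θ,q}(t ↦ t·∫_t^∞ g(r)·log(r/t) dr/r²) ≤ (1−θ)^{−2}·Φ_{θ,q}(g). Consequently Φ_{θ,q}(t ↦ ∫₀ᵗ g(r)·log(t/r) dr/r + t·∫_t^∞ g(r)·log(r/t) dr/r²) ≤ (θ^{−2} + (1−θ)^{−2})·Φ_{θ,q}(g). -/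
open MeasureTheory Set Real Filter ENNReal

/-- The functional `Φ_{θ,q}(g) = (∫₀^∞ (s^{−θ} g(s))^q ds/s)^{1/q}` for `q < ∞`,
and `Φ_{θ,∞}(g) = sup_{s>0} s^{−θ} g(s)`. -/
noncomputable def Phi (θ : ℝ) (q : ℝ≥0∞) (g : ℝ → ℝ≥0∞) : ℝ≥0∞ :=
  if q = ∞ then ⨆ s ∈ Set.Ioi (0 : ℝ), ENNReal.ofReal (s ^ (-θ)) * g s
  else (∫⁻ s in Set.Ioi (0 : ℝ),
    (ENNReal.ofReal (s ^ (-θ)) * g s) ^ q.toReal * ENNReal.ofReal s⁻¹) ^ (1 / q.toReal)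

/-!
Both operators with logarithmic kernels are squares of Hardy operators, `P g (t) = ∫₀ᵗ g(r) dr/r`
and `Q g (t) = t ∫ₜ^∞ g(r) dr/r²`: by Fubini and `∫ᵣᵗ du/u = log (t/r)`. Each of `P`, `Q` is
bounded for `Φ_{θ,q}` by Schur's test with the test functions `r ^ θ` and `t ^ (-θ-1)`, which
their kernels reproduce up to the factors `θ⁻¹` and `(1-θ)⁻¹`; for `1 < q` this is Hölder's
inequality followed by Tonelli, for `q = ∞` a direct estimate. The combined bound is Minkowski's
inequality.
-/

lemma ofReal_rpow_mul_ofReal_rpow {x : ℝ} (hx : 0 < x) (a b : ℝ) :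
    ENNReal.ofReal (x ^ a) * ENNReal.ofReal (x ^ b) = ENNReal.ofReal (x ^ (a + b)) := by
  rw [← ENNReal.ofReal_mul (by positivity), ← Real.rpow_add hx]

lemma ofReal_rpow_rpow {x : ℝ} (hx : 0 < x) (a b : ℝ) :
    ENNReal.ofReal (x ^ a) ^ b = ENNReal.ofReal (x ^ (a * b)) := by
  rw [ENNReal.ofReal_rpow_of_pos (by positivity), ← Real.rpow_mul hx.le]

lemma ofReal_sq_inv_eq_rpow {x : ℝ} (hx : 0 < x) :
    ENNReal.ofReal (x ^ 2)⁻¹ = ENNReal.ofReal (x ^ (-2 : ℝ)) := by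
  rw [Real.rpow_neg hx.le]; norm_cast

lemma ofReal_rpow_mul_ofReal_inv {x : ℝ} (hx : 0 < x) (a : ℝ) :
    ENNReal.ofReal (x ^ a) * ENNReal.ofReal x⁻¹ = ENNReal.ofReal (x ^ (a - 1)) := by
  rw [← Real.rpow_neg_one x, ofReal_rpow_mul_ofReal_rpow hx, ← sub_eq_add_neg]

lemma ofReal_rpow_mul_rpow_mul_ofReal_inv {s : ℝ} (hs : 0 < s) {p : ℝ} (hp : 0 ≤ p) (a : ℝ)
    (X : ℝ≥0∞) :
    (ENNReal.ofReal (s ^ a) * X) ^ p * ENNReal.ofReal s⁻¹ =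
      X ^ p * ENNReal.ofReal (s ^ (a * p - 1)) := by
  rw [ENNReal.mul_rpow_of_nonneg _ _ hp, ofReal_rpow_rpow hs, ← Real.rpow_neg_one, mul_right_comm,
    mul_comm _ (X ^ p), ofReal_rpow_mul_ofReal_rpow hs, sub_eq_add_neg]

lemma ofReal_eq_rpow_one (x : ℝ) : ENNReal.ofReal x = ENNReal.ofReal (x ^ (1 : ℝ)) := by
  rw [Real.rpow_one]

lemma measurable_ofReal_rpow (a : ℝ) : Measurable fun x : ℝ => ENNReal.ofReal (x ^ a) :=
  (measurable_id.pow_const a).ennreal_ofReal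

lemma Phi_eq_lintegral_withDensity {θ : ℝ} {q : ℝ≥0∞} (hq : q ≠ ∞) (g : ℝ → ℝ≥0∞) :
    Phi θ q g = (∫⁻ s, (ENNReal.ofReal (s ^ (-θ)) * g s) ^ q.toReal
      ∂(volume.restrict (Ioi 0)).withDensity fun s => ENNReal.ofReal s⁻¹) ^ (1 / q.toReal) := by
  rw [Phi, if_neg hq, lintegral_withDensity_eq_lintegral_mul_non_measurable _
    measurable_inv.ennreal_ofReal (ae_of_all _ fun _ => ofReal_lt_top)]
  simp only [Pi.mul_apply, mul_comm]

lemma Phi_add_le {θ : ℝ} {q : ℝ≥0∞} (hq : 1 ≤ q) {f h : ℝ → ℝ≥0∞} (hf : Measurable f)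
    (hh : Measurable h) : Phi θ q (f + h) ≤ Phi θ q f + Phi θ q h := by
  by_cases hqt : q = ∞
  · simp only [Phi, if_pos hqt, Pi.add_apply, mul_add]
    exact iSup₂_le fun s hs => add_le_add (le_biSup (fun s => ENNReal.ofReal (s ^ (-θ)) * f s) hs)
      (le_biSup (fun s => ENNReal.ofReal (s ^ (-θ)) * h s) hs)
  · simp only [Phi_eq_lintegral_withDensity hqt, Pi.add_apply, mul_add]
    exact ENNReal.lintegral_Lp_add_le ((measurable_ofReal_rpow _).mul hf).aemeasurable
      ((measurable_ofReal_rpow _).mul hh).aemeasurable (ENNReal.toReal_mono hqt hq)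

lemma lintegral_mul_rpow_le_of_weight {α : Type*} [MeasurableSpace α] {μ : Measure α} {p : ℝ}
    (hp : 1 ≤ p) {a f w : α → ℝ≥0∞} (ha : AEMeasurable a μ) (hf : AEMeasurable f μ)
    (hw : AEMeasurable w μ) (hw0 : ∀ᵐ x ∂μ, w x ≠ 0) (hwt : ∀ᵐ x ∂μ, w x ≠ ∞) :
    (∫⁻ x, a x * f x ∂μ) ^ p ≤
      (∫⁻ x, a x * f x ^ p * w x ^ (1 - p) ∂μ) * (∫⁻ x, a x * w x ∂μ) ^ (p - 1) := by
  rcases hp.eq_or_lt with rfl | hp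
  · simp
  set p' := p.conjExponent
  have hpp' : p.HolderConjugate p' := .conjExponent hp
  have hp0 : 0 < p := hpp'.pos
  have hp'0 : 0 < p' := hpp'.symm.pos
  have hsplit : ∀ᵐ x ∂μ, a x * f x =
      (a x * f x ^ p * w x ^ (1 - p)) ^ (1 / p) * (a x * w x) ^ (1 / p') := by
    filter_upwards [hw0, hwt] with x hx0 hxt
    have hexp : (1 - p) * (1 / p) + 1 / p' = 0 := by
      have := hpp'.inv_add_inv_eq_one; field_simp at this ⊢; linarith
    rw [ENNReal.mul_rpow_of_nonneg _ _ (by positivity),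
      ENNReal.mul_rpow_of_nonneg _ _ (by positivity),
      ENNReal.mul_rpow_of_nonneg _ _ (by positivity), ← ENNReal.rpow_mul, ← ENNReal.rpow_mul, mul_one_div_cancel hp0.ne']
    calc a x * f x
        = a x ^ (1 / p + 1 / p') * f x ^ (1 : ℝ) * w x ^ ((1 - p) * (1 / p) + 1 / p') := by
          rw [hexp, ENNReal.rpow_zero, one_div, one_div, hpp'.inv_add_inv_eq_one]; simp
      _ = _ := by
          rw [ENNReal.rpow_add_of_nonneg _ _ (by positivity) (by positivity),
            ENNReal.rpow_add _ _ hx0 hxt]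
          ring
  have hholder := ENNReal.lintegral_mul_le_Lp_mul_Lq μ hpp'
    (f := fun x => (a x * f x ^ p * w x ^ (1 - p)) ^ (1 / p)) (g := fun x => (a x * w x) ^ (1 / p'))
    (((ha.mul (hf.pow_const p)).mul (hw.pow_const _)).pow_const _) ((ha.mul hw).pow_const _)
  simp only [Pi.mul_apply, ← ENNReal.rpow_mul, one_div_mul_cancel hp0.ne',
    one_div_mul_cancel hp'0.ne', ENNReal.rpow_one] at hholder
  rw [lintegral_congr_ae hsplit]
  calc _ ≤ ((∫⁻ x, a x * f x ^ p * w x ^ (1 - p) ∂μ) ^ (1 / p) *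
        (∫⁻ x, a x * w x ∂μ) ^ (1 / p')) ^ p := ENNReal.rpow_le_rpow hholder hp0.le
    _ = _ := by
      rw [ENNReal.mul_rpow_of_nonneg _ _ hp0.le, ← ENNReal.rpow_mul, ← ENNReal.rpow_mul,
        one_div_mul_cancel hp0.ne', ENNReal.rpow_one, one_div, ← div_eq_inv_mul,
        hpp'.div_conj_eq_sub_one]

section SchurTest

variable {θ : ℝ} {c : ℝ≥0∞} {k : ℝ → ℝ → ℝ≥0∞}

lemma measurable_lintegral_kernel_mul (hk : Measurable (Function.uncurry k)) {g : ℝ → ℝ≥0∞}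
    (hg : Measurable g) : Measurable fun t => ∫⁻ r in Ioi 0, k t r * g r :=
  (hk.mul (hg.comp measurable_snd)).lintegral_prod_right'

lemma Phi_top_lintegral_kernel_le (hk : Measurable (Function.uncurry k))
    (H1 : ∀ t, 0 < t → ∫⁻ r in Ioi 0, k t r * ENNReal.ofReal (r ^ θ) ≤ c * ENNReal.ofReal (t ^ θ))
    (g : ℝ → ℝ≥0∞) : Phi θ ∞ (fun t => ∫⁻ r in Ioi 0, k t r * g r) ≤ c * Phi θ ∞ g := by
  simp only [Phi, if_true]
  set M := ⨆ s ∈ Ioi (0 : ℝ), ENNReal.ofReal (s ^ (-θ)) * g s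
  have hg : ∀ r ∈ Ioi (0 : ℝ), g r ≤ ENNReal.ofReal (r ^ θ) * M := fun r hr => calc
    g r = ENNReal.ofReal (r ^ θ) * (ENNReal.ofReal (r ^ (-θ)) * g r) := by
      rw [← mul_assoc, ofReal_rpow_mul_ofReal_rpow hr, add_neg_cancel, Real.rpow_zero,
        ENNReal.ofReal_one, one_mul]
    _ ≤ ENNReal.ofReal (r ^ θ) * M :=
      mul_le_mul_right (le_biSup (fun s => ENNReal.ofReal (s ^ (-θ)) * g s) hr) _
  refine iSup₂_le fun t (ht : 0 < t) => ?_
  have hkt : Measurable fun r => k t r * ENNReal.ofReal (r ^ θ) :=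
    hk.of_uncurry_left.fun_mul (measurable_ofReal_rpow θ)
  calc ENNReal.ofReal (t ^ (-θ)) * ∫⁻ r in Ioi 0, k t r * g r
      ≤ ENNReal.ofReal (t ^ (-θ)) * ∫⁻ r in Ioi 0, k t r * ENNReal.ofReal (r ^ θ) * M := by
        refine mul_le_mul_right (setLIntegral_mono (hkt.mul_const M) fun r hr => ?_) _
        rw [mul_assoc]
        exact mul_le_mul_right (hg r hr) _
    _ ≤ ENNReal.ofReal (t ^ (-θ)) * (c * ENNReal.ofReal (t ^ θ) * M) := by
        rw [lintegral_mul_const _ hkt]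
        gcongr
        exact H1 t ht
    _ = c * M := by
        rw [mul_comm c, mul_assoc, ← mul_assoc, ofReal_rpow_mul_ofReal_rpow ht, neg_add_cancel,
          Real.rpow_zero, ENNReal.ofReal_one, one_mul]

lemma lintegral_lintegral_kernel_mul_le (hk : Measurable (Function.uncurry k))
    (H2 : ∀ r, 0 < r →
      ∫⁻ t in Ioi 0, k t r * ENNReal.ofReal (t ^ (-θ - 1)) ≤ c * ENNReal.ofReal (r ^ (-θ - 1)))
    {h : ℝ → ℝ≥0∞} (hh : Measurable h) :
    ∫⁻ t in Ioi 0, (∫⁻ r in Ioi 0, k t r * h r) * ENNReal.ofReal (t ^ (-θ - 1)) ≤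
      c * ∫⁻ r in Ioi 0, h r * ENNReal.ofReal (r ^ (-θ - 1)) := calc
  _ = ∫⁻ t in Ioi 0, ∫⁻ r in Ioi 0, h r * (k t r * ENNReal.ofReal (t ^ (-θ - 1))) := by
      refine lintegral_congr fun t => ?_
      rw [← lintegral_mul_const _ (hk.of_uncurry_left.fun_mul hh)]
      exact lintegral_congr fun r => by ring
  _ = ∫⁻ r in Ioi 0, h r * ∫⁻ t in Ioi 0, k t r * ENNReal.ofReal (t ^ (-θ - 1)) := by
      rw [lintegral_lintegral_swap (by fun_prop)]
      exact lintegral_congr fun r =>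
        lintegral_const_mul _ (hk.of_uncurry_right.fun_mul (measurable_ofReal_rpow _))
  _ ≤ ∫⁻ r in Ioi 0, c * (h r * ENNReal.ofReal (r ^ (-θ - 1))) := by
      refine setLIntegral_mono (by fun_prop) fun r (hr : 0 < r) => ?_
      rw [mul_left_comm]
      exact mul_le_mul_right (H2 r hr) _
  _ = _ := lintegral_const_mul _ (by fun_prop)

lemma lintegral_kernel_mul_rpow_le (hk : Measurable (Function.uncurry k))
    (H1 : ∀ t, 0 < t →
      ∫⁻ r in Ioi 0, k t r * ENNReal.ofReal (r ^ θ) ≤ c * ENNReal.ofReal (t ^ θ))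
    {p : ℝ} (hp : 1 ≤ p) {g : ℝ → ℝ≥0∞} (hg : Measurable g) {t : ℝ} (ht : 0 < t) :
    (∫⁻ r in Ioi 0, k t r * g r) ^ p ≤ c ^ (p - 1) * ENNReal.ofReal (t ^ (θ * (p - 1))) *
      ∫⁻ r in Ioi 0, k t r * (g r ^ p * ENNReal.ofReal (r ^ (θ * (1 - p)))) := calc
  _ ≤ (∫⁻ r in Ioi 0, k t r * g r ^ p * ENNReal.ofReal (r ^ θ) ^ (1 - p)) *
        (∫⁻ r in Ioi 0, k t r * ENNReal.ofReal (r ^ θ)) ^ (p - 1) := by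
      refine lintegral_mul_rpow_le_of_weight hp hk.of_uncurry_left.aemeasurable hg.aemeasurable
        (measurable_ofReal_rpow θ).aemeasurable ?_ (ae_of_all _ fun _ => ofReal_ne_top)
      filter_upwards [ae_restrict_mem measurableSet_Ioi] with r (hr : 0 < r)
      exact (ENNReal.ofReal_pos.2 (Real.rpow_pos_of_pos hr θ)).ne'
  _ ≤ (∫⁻ r in Ioi 0, k t r * g r ^ p * ENNReal.ofReal (r ^ θ) ^ (1 - p)) *
        (c * ENNReal.ofReal (t ^ θ)) ^ (p - 1) := by
      gcongr
      exact H1 t ht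
  _ = _ := by
      rw [ENNReal.mul_rpow_of_nonneg _ _ (by linarith), ofReal_rpow_rpow ht, mul_comm]
      congr 1
      refine setLIntegral_congr_fun measurableSet_Ioi fun r (hr : 0 < r) => ?_
      rw [ofReal_rpow_rpow hr, mul_assoc]

lemma lintegral_rpow_lintegral_kernel_le (hk : Measurable (Function.uncurry k))
    (H1 : ∀ t, 0 < t →
      ∫⁻ r in Ioi 0, k t r * ENNReal.ofReal (r ^ θ) ≤ c * ENNReal.ofReal (t ^ θ))
    (H2 : ∀ r, 0 < r →
      ∫⁻ t in Ioi 0, k t r * ENNReal.ofReal (t ^ (-θ - 1)) ≤ c * ENNReal.ofReal (r ^ (-θ - 1)))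
    {p : ℝ} (hp : 1 ≤ p) {g : ℝ → ℝ≥0∞} (hg : Measurable g) :
    ∫⁻ s in Ioi 0, (ENNReal.ofReal (s ^ (-θ)) * ∫⁻ r in Ioi 0, k s r * g r) ^ p *
        ENNReal.ofReal s⁻¹ ≤
      c ^ p * ∫⁻ s in Ioi 0, (ENNReal.ofReal (s ^ (-θ)) * g s) ^ p * ENNReal.ofReal s⁻¹ := by
  set h := fun r => g r ^ p * ENNReal.ofReal (r ^ (θ * (1 - p)))
  have hh : Measurable h := (hg.pow_const p).mul (measurable_ofReal_rpow _)
  have hKh := measurable_lintegral_kernel_mul hk hh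
  calc _ = ∫⁻ s in Ioi 0, (∫⁻ r in Ioi 0, k s r * g r) ^ p * ENNReal.ofReal (s ^ (-θ * p - 1)) :=
        setLIntegral_congr_fun measurableSet_Ioi fun s hs =>
          ofReal_rpow_mul_rpow_mul_ofReal_inv hs (by linarith) _ _
    _ ≤ ∫⁻ s in Ioi 0, c ^ (p - 1) *
          ((∫⁻ r in Ioi 0, k s r * h r) * ENNReal.ofReal (s ^ (-θ - 1))) := by
        refine setLIntegral_mono (by fun_prop) fun s (hs : 0 < s) => ?_
        calc _ ≤ c ^ (p - 1) * ENNReal.ofReal (s ^ (θ * (p - 1))) *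
              (∫⁻ r in Ioi 0, k s r * h r) * ENNReal.ofReal (s ^ (-θ * p - 1)) := by
              gcongr
              exact lintegral_kernel_mul_rpow_le hk H1 hp hg hs
          _ = _ := by
              rw [mul_right_comm _ (ENNReal.ofReal _), mul_assoc, mul_assoc,
                ofReal_rpow_mul_ofReal_rpow hs]
              ring_nf
    _ ≤ c ^ (p - 1) * (c * ∫⁻ r in Ioi 0, h r * ENNReal.ofReal (r ^ (-θ - 1))) := by
        rw [lintegral_const_mul _ (by fun_prop)]
        gcongr
        exact lintegral_lintegral_kernel_mul_le hk H2 hh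
    _ = _ := by
        have hc : c ^ (p - 1) * c = c ^ p := by
          simpa using (ENNReal.rpow_add_of_nonneg (x := c) (p - 1) 1 (by linarith) zero_le_one).symm
        rw [← mul_assoc, hc]
        congr 1
        refine setLIntegral_congr_fun measurableSet_Ioi fun r (hr : 0 < r) => ?_
        rw [ofReal_rpow_mul_rpow_mul_ofReal_inv hr (by linarith), mul_assoc,
          ofReal_rpow_mul_ofReal_rpow hr]
        ring_nf

theorem Phi_lintegral_kernel_le (hk : Measurable (Function.uncurry k))
    (H1 : ∀ t, 0 < t →
      ∫⁻ r in Ioi 0, k t r * ENNReal.ofReal (r ^ θ) ≤ c * ENNReal.ofReal (t ^ θ))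
    (H2 : ∀ r, 0 < r →
      ∫⁻ t in Ioi 0, k t r * ENNReal.ofReal (t ^ (-θ - 1)) ≤ c * ENNReal.ofReal (r ^ (-θ - 1)))
    {q : ℝ≥0∞} (hq : 1 ≤ q) {g : ℝ → ℝ≥0∞} (hg : Measurable g) :
    Phi θ q (fun t => ∫⁻ r in Ioi 0, k t r * g r) ≤ c * Phi θ q g := by
  by_cases hqt : q = ∞
  · subst hqt
    exact Phi_top_lintegral_kernel_le hk H1 g
  have hp : 1 ≤ q.toReal := ENNReal.toReal_mono hqt hq
  rw [Phi, Phi, if_neg hqt, if_neg hqt]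
  calc _ ≤ (c ^ q.toReal * ∫⁻ s in Ioi 0,
          (ENNReal.ofReal (s ^ (-θ)) * g s) ^ q.toReal * ENNReal.ofReal s⁻¹) ^ (1 / q.toReal) :=
        ENNReal.rpow_le_rpow (lintegral_rpow_lintegral_kernel_le hk H1 H2 hp hg) (by positivity)
    _ = _ := by
        rw [ENNReal.mul_rpow_of_nonneg _ _ (by positivity), ← ENNReal.rpow_mul,
          mul_one_div_cancel (by positivity), ENNReal.rpow_one]

end SchurTest

lemma lintegral_Ioo_zero_ofReal_rpow_sub_one {a s : ℝ} (ha : 0 < a) (hs : 0 < s) :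
    ∫⁻ r in Ioo 0 s, ENNReal.ofReal (r ^ (a - 1)) = ENNReal.ofReal (s ^ a / a) := by
  have hint : IntegrableOn (fun r : ℝ => r ^ (a - 1)) (Ioo 0 s) :=
    (intervalIntegral.intervalIntegrable_rpow' (by linarith)).1.mono_set Ioo_subset_Ioc_self
  rw [← ofReal_integral_eq_lintegral_ofReal hint
    (ae_restrict_of_forall_mem measurableSet_Ioo fun r hr => Real.rpow_nonneg hr.1.le _),
    ← integral_Ioc_eq_integral_Ioo, ← intervalIntegral.integral_of_le hs.le,
    integral_rpow (Or.inl (by linarith)), Real.zero_rpow (by linarith), sub_add_cancel, sub_zero]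

lemma lintegral_Ioi_ofReal_rpow_neg_sub_one {a s : ℝ} (ha : 0 < a) (hs : 0 < s) :
    ∫⁻ t in Ioi s, ENNReal.ofReal (t ^ (-a - 1)) = ENNReal.ofReal (s ^ (-a) / a) := by
  have hlt : -a - 1 < -1 := by linarith
  rw [← ofReal_integral_eq_lintegral_ofReal (integrableOn_Ioi_rpow_of_lt hlt hs)
    (ae_restrict_of_forall_mem measurableSet_Ioi fun t ht => Real.rpow_nonneg (hs.trans ht).le _),
    integral_Ioi_rpow_of_lt hlt hs, show -a - 1 + 1 = -a by ring, neg_div, div_neg, neg_neg]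

lemma lintegral_Ioo_ofReal_inv {r t : ℝ} (hr : 0 < r) (hrt : r < t) :
    ∫⁻ s in Ioo r t, ENNReal.ofReal s⁻¹ = ENNReal.ofReal (Real.log (t / r)) := by
  have hint : IntegrableOn (fun s : ℝ => s⁻¹) (Ioo r t) :=
    ((continuousOn_inv₀.mono fun x hx => ((hr.trans_le (uIcc_of_le hrt.le ▸ hx).1).ne' :
      x ∈ ({0}ᶜ : Set ℝ))).intervalIntegrable.1).mono_set Ioo_subset_Ioc_self
  rw [← ofReal_integral_eq_lintegral_ofReal hint
    (ae_restrict_of_forall_mem measurableSet_Ioo fun s hs => (inv_pos.2 (hr.trans hs.1)).le),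
    ← integral_Ioc_eq_integral_Ioo, ← intervalIntegral.integral_of_le hrt.le,
    integral_inv (notMem_uIcc_of_lt hr (hr.trans hrt))]

lemma setLIntegral_mul_setLIntegral_Iio_inter_comm (S : Set ℝ) {f g : ℝ → ℝ≥0∞}
    (hf : Measurable f) (hg : Measurable g) :
    ∫⁻ t in S, f t * ∫⁻ s in Iio t ∩ S, g s = ∫⁻ s in S, g s * ∫⁻ t in Ioi s ∩ S, f t := by
  have hF : Measurable (Function.uncurry fun t s : ℝ => {p : ℝ × ℝ | p.2 < p.1}.indicator
      (fun p => f p.1 * g p.2) (t, s)) :=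
    (by fun_prop : Measurable fun p : ℝ × ℝ => f p.1 * g p.2).indicator
      (measurableSet_lt measurable_snd measurable_fst)
  calc _ = ∫⁻ t in S, ∫⁻ s in S,
        {p : ℝ × ℝ | p.2 < p.1}.indicator (fun p => f p.1 * g p.2) (t, s) := by
        refine lintegral_congr fun t => ?_
        rw [← lintegral_const_mul _ hg, ← Measure.restrict_restrict measurableSet_Iio,
          ← lintegral_indicator measurableSet_Iio]
        congr with s
    _ = ∫⁻ s in S, ∫⁻ t in S,
        {p : ℝ × ℝ | p.2 < p.1}.indicator (fun p => f p.1 * g p.2) (t, s) :=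
        lintegral_lintegral_swap hF.aemeasurable
    _ = _ := by
        refine lintegral_congr fun s => ?_
        rw [← lintegral_const_mul _ hf, ← Measure.restrict_restrict measurableSet_Ioi,
          ← lintegral_indicator measurableSet_Ioi]
        congr with t
        by_cases h : s < t <;> simp [h, mul_comm]

noncomputable def hardyOp (g : ℝ → ℝ≥0∞) (t : ℝ) : ℝ≥0∞ :=
  ∫⁻ r in Ioo 0 t, g r * ENNReal.ofReal r⁻¹

noncomputable def hardyDualOp (g : ℝ → ℝ≥0∞) (t : ℝ) : ℝ≥0∞ :=
  ENNReal.ofReal t * ∫⁻ r in Ioi t, g r * ENNReal.ofReal (r ^ 2)⁻¹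

noncomputable def hardyKernel (t r : ℝ) : ℝ≥0∞ :=
  (Iio t).indicator (fun r => ENNReal.ofReal r⁻¹) r

noncomputable def hardyDualKernel (t r : ℝ) : ℝ≥0∞ :=
  (Ioi t).indicator (fun r => ENNReal.ofReal t * ENNReal.ofReal (r ^ 2)⁻¹) r

lemma measurable_hardyKernel : Measurable (Function.uncurry hardyKernel) :=
  (measurable_snd.inv.ennreal_ofReal.indicator (measurableSet_lt measurable_snd measurable_fst) :
    Measurable ({p : ℝ × ℝ | p.2 < p.1}.indicator fun p => ENNReal.ofReal p.2⁻¹))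

lemma measurable_hardyDualKernel : Measurable (Function.uncurry hardyDualKernel) :=
  ((by fun_prop : Measurable fun p : ℝ × ℝ =>
      ENNReal.ofReal p.1 * ENNReal.ofReal (p.2 ^ 2)⁻¹).indicator
    (measurableSet_lt measurable_fst measurable_snd) :
    Measurable ({p : ℝ × ℝ | p.1 < p.2}.indicator
      fun p => ENNReal.ofReal p.1 * ENNReal.ofReal (p.2 ^ 2)⁻¹))

lemma hardyOp_eq_lintegral_kernel (g : ℝ → ℝ≥0∞) :
    hardyOp g = fun t => ∫⁻ r in Ioi 0, hardyKernel t r * g r := by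
  ext t
  simp only [hardyOp, hardyKernel, ← indicator_mul_left]
  rw [lintegral_indicator measurableSet_Iio, Measure.restrict_restrict measurableSet_Iio,
    Iio_inter_Ioi]
  simp only [mul_comm]

lemma hardyDualOp_eq_lintegral_kernel (g : ℝ → ℝ≥0∞) :
    hardyDualOp g = fun t => ∫⁻ r in Ioi 0, hardyDualKernel t r * g r := by
  ext t
  simp only [hardyDualOp, hardyDualKernel, ← indicator_mul_left]
  rw [lintegral_indicator measurableSet_Ioi, Measure.restrict_restrict measurableSet_Ioi]
  rcases le_or_gt t 0 with ht | ht
  · simp [ENNReal.ofReal_of_nonpos ht]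
  · rw [inter_eq_left.2 (Ioi_subset_Ioi ht.le), ← lintegral_const_mul' _ _ ofReal_ne_top]
    exact lintegral_congr fun r => by ring

lemma measurable_hardyOp {g : ℝ → ℝ≥0∞} (hg : Measurable g) : Measurable (hardyOp g) :=
  hardyOp_eq_lintegral_kernel g ▸ measurable_lintegral_kernel_mul measurable_hardyKernel hg

lemma measurable_hardyDualOp {g : ℝ → ℝ≥0∞} (hg : Measurable g) : Measurable (hardyDualOp g) :=
  hardyDualOp_eq_lintegral_kernel g ▸ measurable_lintegral_kernel_mul measurable_hardyDualKernel hg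

section HardyMoments

variable {θ : ℝ}

lemma lintegral_hardyKernel_mul_rpow (hθ : 0 < θ) {t : ℝ} (ht : 0 < t) :
    ∫⁻ r in Ioi 0, hardyKernel t r * ENNReal.ofReal (r ^ θ) =
      ENNReal.ofReal θ⁻¹ * ENNReal.ofReal (t ^ θ) := by
  rw [← congrFun (hardyOp_eq_lintegral_kernel _) t, hardyOp,
    setLIntegral_congr_fun measurableSet_Ioo fun r hr => ofReal_rpow_mul_ofReal_inv hr.1 θ,
    lintegral_Ioo_zero_ofReal_rpow_sub_one hθ ht, div_eq_mul_inv, mul_comm,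
    ENNReal.ofReal_mul (by positivity)]

lemma lintegral_hardyKernel_mul_rpow_left (hθ : 0 < θ) {r : ℝ} (hr : 0 < r) :
    ∫⁻ t in Ioi 0, hardyKernel t r * ENNReal.ofReal (t ^ (-θ - 1)) =
      ENNReal.ofReal θ⁻¹ * ENNReal.ofReal (r ^ (-θ - 1)) := by
  have hk : ∀ t, hardyKernel t r * ENNReal.ofReal (t ^ (-θ - 1)) =
      (Ioi r).indicator (fun t => ENNReal.ofReal r⁻¹ * ENNReal.ofReal (t ^ (-θ - 1))) t :=
    fun t => by by_cases h : r < t <;> simp [hardyKernel, h]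
  simp only [hk]
  rw [lintegral_indicator measurableSet_Ioi, Measure.restrict_restrict measurableSet_Ioi,
    inter_eq_left.2 (Ioi_subset_Ioi hr.le), lintegral_const_mul _ (measurable_ofReal_rpow _),
    lintegral_Ioi_ofReal_rpow_neg_sub_one hθ hr, ← ENNReal.ofReal_mul (by positivity),
    ← ENNReal.ofReal_mul (by positivity), Real.rpow_sub_one hr.ne']
  ring_nf

lemma lintegral_hardyDualKernel_mul_rpow (hθ : θ < 1) {t : ℝ} (ht : 0 < t) :
    ∫⁻ r in Ioi 0, hardyDualKernel t r * ENNReal.ofReal (r ^ θ) =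
      ENNReal.ofReal (1 - θ)⁻¹ * ENNReal.ofReal (t ^ θ) := by
  rw [← congrFun (hardyDualOp_eq_lintegral_kernel _) t, hardyDualOp,
    setLIntegral_congr_fun measurableSet_Ioi fun r (hr : t < r) => by
      rw [ofReal_sq_inv_eq_rpow (ht.trans hr), ofReal_rpow_mul_ofReal_rpow (ht.trans hr),
        show θ + -2 = -(1 - θ) - 1 by ring],
    lintegral_Ioi_ofReal_rpow_neg_sub_one (by linarith) ht, ← ENNReal.ofReal_mul ht.le,
    ← ENNReal.ofReal_mul (inv_nonneg.2 (by linarith)), Real.rpow_neg ht.le,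
    Real.rpow_sub ht, Real.rpow_one]
  field_simp

lemma lintegral_hardyDualKernel_mul_rpow_left (hθ : θ < 1) {r : ℝ} (hr : 0 < r) :
    ∫⁻ t in Ioi 0, hardyDualKernel t r * ENNReal.ofReal (t ^ (-θ - 1)) =
      ENNReal.ofReal (1 - θ)⁻¹ * ENNReal.ofReal (r ^ (-θ - 1)) := by
  have hk : ∀ t, hardyDualKernel t r * ENNReal.ofReal (t ^ (-θ - 1)) = (Iio r).indicator
      (fun t => ENNReal.ofReal t * ENNReal.ofReal (r ^ 2)⁻¹ * ENNReal.ofReal (t ^ (-θ - 1))) t :=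
    fun t => by by_cases h : t < r <;> simp [hardyDualKernel, h]
  simp only [hk]
  rw [lintegral_indicator measurableSet_Iio, Measure.restrict_restrict measurableSet_Iio,
    Iio_inter_Ioi, setLIntegral_congr_fun measurableSet_Ioo fun t ht => by
      rw [mul_right_comm, ofReal_eq_rpow_one, ofReal_rpow_mul_ofReal_rpow ht.1,
        show (1 : ℝ) + (-θ - 1) = (1 - θ) - 1 by ring],
    lintegral_mul_const _ (measurable_ofReal_rpow _),
    lintegral_Ioo_zero_ofReal_rpow_sub_one (by linarith) hr,
    ← ENNReal.ofReal_mul (div_nonneg (by positivity) (by linarith)),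
    ← ENNReal.ofReal_mul (inv_nonneg.2 (by linarith)), Real.rpow_sub hr, Real.rpow_sub hr,
    Real.rpow_neg hr.le, Real.rpow_one]
  field_simp

end HardyMoments

section Hardy

variable {θ : ℝ} {q : ℝ≥0∞} {g : ℝ → ℝ≥0∞}

theorem Phi_hardyOp_le (hθ : 0 < θ) (hq : 1 ≤ q) (hg : Measurable g) :
    Phi θ q (hardyOp g) ≤ ENNReal.ofReal θ⁻¹ * Phi θ q g :=
  hardyOp_eq_lintegral_kernel g ▸ Phi_lintegral_kernel_le measurable_hardyKernel
    (fun _ ht => (lintegral_hardyKernel_mul_rpow hθ ht).le)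
    (fun _ hr => (lintegral_hardyKernel_mul_rpow_left hθ hr).le) hq hg

theorem Phi_hardyDualOp_le (hθ : θ < 1) (hq : 1 ≤ q) (hg : Measurable g) :
    Phi θ q (hardyDualOp g) ≤ ENNReal.ofReal (1 - θ)⁻¹ * Phi θ q g :=
  hardyDualOp_eq_lintegral_kernel g ▸ Phi_lintegral_kernel_le measurable_hardyDualKernel
    (fun _ ht => (lintegral_hardyDualKernel_mul_rpow hθ ht).le)
    (fun _ hr => (lintegral_hardyDualKernel_mul_rpow_left hθ hr).le) hq hg

lemma Phi_iterate_le {T : (ℝ → ℝ≥0∞) → ℝ → ℝ≥0∞} {a : ℝ} (ha : 0 ≤ a)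
    (hT : ∀ f, Measurable f → Phi θ q (T f) ≤ ENNReal.ofReal a * Phi θ q f)
    (hTm : ∀ f, Measurable f → Measurable (T f)) (hg : Measurable g) :
    Phi θ q (T (T g)) ≤ ENNReal.ofReal (a ^ 2) * Phi θ q g := calc
  _ ≤ ENNReal.ofReal a * (ENNReal.ofReal a * Phi θ q g) :=
      (hT _ (hTm g hg)).trans (mul_le_mul_right (hT g hg) _)
  _ = _ := by rw [← mul_assoc, ← ENNReal.ofReal_mul ha, sq]

end Hardy

lemma hardyOp_hardyOp {g : ℝ → ℝ≥0∞} (hg : Measurable g) (t : ℝ) :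
    hardyOp (hardyOp g) t =
      ∫⁻ r in Ioo 0 t, g r * ENNReal.ofReal (Real.log (t / r)) * ENNReal.ofReal r⁻¹ := by
  calc hardyOp (hardyOp g) t
      = ∫⁻ u in Ioo 0 t, ENNReal.ofReal u⁻¹ *
          ∫⁻ r in Iio u ∩ Ioo 0 t, g r * ENNReal.ofReal r⁻¹ := by
        refine setLIntegral_congr_fun measurableSet_Ioo fun u hu => ?_
        rw [hardyOp, mul_comm, Iio_inter_Ioo, min_eq_left hu.2.le]
    _ = ∫⁻ r in Ioo 0 t, g r * ENNReal.ofReal r⁻¹ * ∫⁻ u in Ioi r ∩ Ioo 0 t, ENNReal.ofReal u⁻¹ :=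
        setLIntegral_mul_setLIntegral_Iio_inter_comm _ measurable_inv.ennreal_ofReal
          (hg.mul measurable_inv.ennreal_ofReal)
    _ = _ := by
        refine setLIntegral_congr_fun measurableSet_Ioo fun r hr => ?_
        rw [Ioi_inter_Ioo, max_eq_left hr.1.le, lintegral_Ioo_ofReal_inv hr.1 hr.2]
        ring

lemma hardyDualOp_hardyDualOp {g : ℝ → ℝ≥0∞} (hg : Measurable g) (t : ℝ) :
    hardyDualOp (hardyDualOp g) t = ENNReal.ofReal t *
      ∫⁻ r in Ioi t, g r * ENNReal.ofReal (Real.log (r / t)) * ENNReal.ofReal (r ^ 2)⁻¹ := by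
  rcases le_or_gt t 0 with ht | ht
  · simp [hardyDualOp, ENNReal.ofReal_of_nonpos ht]
  rw [hardyDualOp]
  congr 1
  calc ∫⁻ u in Ioi t, hardyDualOp g u * ENNReal.ofReal (u ^ 2)⁻¹
      = ∫⁻ u in Ioi t, ENNReal.ofReal u⁻¹ *
          ∫⁻ r in Ioi u ∩ Ioi t, g r * ENNReal.ofReal (r ^ 2)⁻¹ := by
        refine setLIntegral_congr_fun measurableSet_Ioi fun u (hu : t < u) => ?_
        have hu0 : 0 < u := ht.trans hu
        rw [hardyDualOp, inter_eq_left.2 (Ioi_subset_Ioi hu.le), mul_right_comm,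
          ofReal_sq_inv_eq_rpow hu0, ofReal_eq_rpow_one u, ofReal_rpow_mul_ofReal_rpow hu0,
          ← Real.rpow_neg_one]
        norm_num
    _ = ∫⁻ r in Ioi t, g r * ENNReal.ofReal (r ^ 2)⁻¹ * ∫⁻ u in Iio r ∩ Ioi t, ENNReal.ofReal u⁻¹ :=
        (setLIntegral_mul_setLIntegral_Iio_inter_comm _
          (hg.mul (measurable_id.pow_const 2).inv.ennreal_ofReal)
          measurable_inv.ennreal_ofReal).symm
    _ = _ := by
        refine setLIntegral_congr_fun measurableSet_Ioi fun r (hr : t < r) => ?_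
        rw [Iio_inter_Ioi, lintegral_Ioo_ofReal_inv ht hr]
        ring

/-- Iterated (logarithmic) Hardy inequalities:
`Φ_{θ,q}(∫₀ᵗ g(r) log(t/r) dr/r) ≤ θ⁻² Φ_{θ,q}(g)`,
`Φ_{θ,q}(t ∫ₜ^∞ g(r) log(r/t) dr/r²) ≤ (1−θ)⁻² Φ_{θ,q}(g)`, and the combined estimate. -/
theorem iterated_hardy_inequalities (θ : ℝ) (q : ℝ≥0∞) (hθ0 : 0 < θ) (hθ1 : θ < 1)
    (hq : 1 ≤ q) (g : ℝ → ℝ≥0∞) (hg : Measurable g) :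
    Phi θ q (fun t => ∫⁻ r in Ioo (0 : ℝ) t,
        g r * ENNReal.ofReal (Real.log (t / r)) * ENNReal.ofReal r⁻¹) ≤
      ENNReal.ofReal (θ ^ 2)⁻¹ * Phi θ q g ∧
    Phi θ q (fun t => ENNReal.ofReal t *
        ∫⁻ r in Ioi t, g r * ENNReal.ofReal (Real.log (r / t)) * ENNReal.ofReal (r ^ 2)⁻¹) ≤
      ENNReal.ofReal ((1 - θ) ^ 2)⁻¹ * Phi θ q g ∧
    Phi θ q (fun t =>
        (∫⁻ r in Ioo (0 : ℝ) t,
          g r * ENNReal.ofReal (Real.log (t / r)) * ENNReal.ofReal r⁻¹) +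
        ENNReal.ofReal t *
          ∫⁻ r in Ioi t, g r * ENNReal.ofReal (Real.log (r / t)) * ENNReal.ofReal (r ^ 2)⁻¹) ≤
      ENNReal.ofReal ((θ ^ 2)⁻¹ + ((1 - θ) ^ 2)⁻¹) * Phi θ q g := by
  simp only [← hardyOp_hardyOp hg, ← hardyDualOp_hardyDualOp hg]
  have hP : Phi θ q (hardyOp (hardyOp g)) ≤ ENNReal.ofReal (θ ^ 2)⁻¹ * Phi θ q g := by
    rw [← inv_pow]
    exact Phi_iterate_le (by positivity) (fun _ => Phi_hardyOp_le hθ0 hq)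
      (fun _ => measurable_hardyOp) hg
  have hQ : Phi θ q (hardyDualOp (hardyDualOp g)) ≤ ENNReal.ofReal ((1 - θ) ^ 2)⁻¹ * Phi θ q g := by
    rw [← inv_pow]
    exact Phi_iterate_le (inv_nonneg.2 (sub_nonneg.2 hθ1.le)) (fun _ => Phi_hardyDualOp_le hθ1 hq)
      (fun _ => measurable_hardyDualOp) hg
  refine ⟨hP, hQ, ?_⟩
  calc _ ≤ Phi θ q (hardyOp (hardyOp g)) + Phi θ q (hardyDualOp (hardyDualOp g)) :=
        Phi_add_le hq (measurable_hardyOp (measurable_hardyOp hg))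
          (measurable_hardyDualOp (measurable_hardyDualOp hg))
    _ ≤ _ := by
        rw [ENNReal.ofReal_add (by positivity) (by positivity), add_mul]
        exact add_le_add hP hQ
end
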